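/- For every inner function u, the compressed shift A_z^u is irreducible: the only closed subspaces M of K_u satisfying A_z^u M ⊆ M and (A_z^u)* M ⊆ M are {0} and K_u. -/

import Mathlib

noncomputable section

open MeasureTheory Complex Filter Topology Set ContinuousLinearMap
open scoped ENNReal NNReal ComplexConjugate

set_option maxHeartbeats 1000000
set_option synthInstance.maxHeartbeats 1000000

namespace TTOPaper

instance fact2pi : Fact (0 < 2 * Real.pi) := ⟨by positivity⟩

/-- The circle, modelled additively as `ℝ / 2πℤ`. -/
abbrev T2π : Type := AddCircle (2 * Real.pi)

/-- Normalized arc-length (Haar) measure on the circle. -/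
abbrev μ : Measure T2π := AddCircle.haarAddCircle

/-- `L²(𝕋)`. -/
abbrev Ltwo := Lp ℂ 2 μ

/-- The identity function `z ↦ z` on the circle, i.e. `θ ↦ e^{iθ}`. -/
def zfun : T2π → ℂ := fun θ => (AddCircle.toCircle θ : ℂ)

lemma continuous_zfun : Continuous zfun :=
  continuous_subtype_val.comp AddCircle.continuous_toCircle

/-- A continuous function on the (compact) circle is essentially bounded. -/
lemma memLinfty_of_continuous {f : T2π → ℂ} (hf : Continuous f) : MemLp f ⊤ μ :=
  hf.memLp_top_of_hasCompactSupport
    (IsCompact.of_isClosed_subset isCompact_univ (isClosed_tsupport f) (Set.subset_univ _)) μ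

lemma memLinfty_contMap (φ : C(T2π, ℂ)) : MemLp (⇑φ) ⊤ μ :=
  memLinfty_of_continuous φ.continuous

lemma memLinfty_zfun : MemLp zfun ⊤ μ := memLinfty_of_continuous continuous_zfun

/-- Pointwise product of two essentially bounded functions is essentially bounded. -/
lemma memLinfty_mul {φ ψ : T2π → ℂ} (hφ : MemLp φ ⊤ μ) (hψ : MemLp ψ ⊤ μ) :
    MemLp (fun θ => φ θ * ψ θ) ⊤ μ := by
  have h : MemLp (φ • ψ) ⊤ μ := MemLp.smul hψ hφ
  exact h.congr_norm (hφ.1.mul hψ.1) (Filter.Eventually.of_forall fun θ => by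
    simp [Pi.smul_apply', smul_eq_mul])

/-- Complex conjugate of an essentially bounded function is essentially bounded. -/
lemma memLinfty_conj {f : T2π → ℂ} (hf : MemLp f ⊤ μ) :
    MemLp (fun θ => (starRingEnd ℂ) (f θ)) ⊤ μ :=
  hf.congr_norm (Complex.continuous_conj.comp_aestronglyMeasurable hf.1)
    (Filter.Eventually.of_forall fun θ => by simp)

/-- Multiplication operator `M_φ : L² → L²` by an essentially bounded symbol `φ`. -/
def mulCLM (φ : T2π → ℂ) (hφ : MemLp φ ⊤ μ) : Ltwo →L[ℂ] Ltwo :=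
  LinearMap.mkContinuous
    { toFun := fun f => MemLp.toLp (φ • (⇑f : T2π → ℂ)) ((Lp.memLp f).smul hφ)
      map_add' := fun f g => by
        have h1 : (φ • (⇑(f + g) : T2π → ℂ)) =ᵐ[μ]
            (φ • (⇑f : T2π → ℂ)) + (φ • (⇑g : T2π → ℂ)) := by
          filter_upwards [Lp.coeFn_add f g] with x hx
          simp only [Pi.smul_apply', Pi.add_apply, hx, smul_add]
        exact (MemLp.toLp_congr _ (((Lp.memLp f).smul hφ).add
          ((Lp.memLp g).smul hφ)) h1).trans (MemLp.toLp_add _ _)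
      map_smul' := fun c f => by
        have h1 : (φ • (⇑(c • f) : T2π → ℂ)) =ᵐ[μ] c • (φ • (⇑f : T2π → ℂ)) := by
          filter_upwards [Lp.coeFn_smul c f] with x hx
          simp only [Pi.smul_apply', hx, Pi.smul_apply, smul_comm c]
        show MemLp.toLp (φ • (⇑(c • f) : T2π → ℂ)) ((Lp.memLp (c • f)).smul hφ)
            = c • MemLp.toLp (φ • (⇑f : T2π → ℂ)) ((Lp.memLp f).smul hφ)
        rw [MemLp.toLp_congr ((Lp.memLp (c • f)).smul hφ)
          (((Lp.memLp f).smul hφ).const_smul c) h1, MemLp.toLp_const_smul] }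
    (eLpNorm φ ⊤ μ).toReal
    (fun f => by
      simp only [LinearMap.coe_mk, AddHom.coe_mk]
      rw [Lp.norm_toLp, Lp.norm_def, ← ENNReal.toReal_mul]
      exact ENNReal.toReal_mono (ENNReal.mul_ne_top hφ.eLpNorm_ne_top (Lp.eLpNorm_ne_top f))
        (eLpNorm_smul_le_eLpNorm_top_mul_eLpNorm 2 (Lp.aestronglyMeasurable f) φ))

/-- The Hardy space `H²`, as the subspace of `L²` of functions whose Fourier coefficients of
negative index all vanish. -/
def H2 : Submodule ℂ Ltwo where
  carrier := {f : Ltwo | ∀ n : ℤ, n < 0 → fourierCoeff (⇑f) n = 0}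
  add_mem' := by
    intro f g hf hg n hn
    have hf' := hf n hn
    have hg' := hg n hn
    rw [← fourierBasis_repr] at hf' hg' ⊢
    rw [map_add, lp.coeFn_add, Pi.add_apply, hf', hg', add_zero]
  zero_mem' := by
    intro n hn
    rw [← fourierBasis_repr, map_zero]
    simp
  smul_mem' := by
    intro c f hf n hn
    have hf' := hf n hn
    rw [← fourierBasis_repr] at hf' ⊢
    rw [_root_.map_smul, lp.coeFn_smul, Pi.smul_apply, hf', smul_zero]

lemma isClosed_H2 : IsClosed (H2 : Set Ltwo) := by
  have h : (H2 : Set Ltwo) =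
      ⋂ (n : ℤ) (_ : n < 0), {f : Ltwo | (fourierBasis.repr f : ℤ → ℂ) n = 0} := by
    ext f
    simp only [Set.mem_iInter, Set.mem_setOf_eq]
    constructor
    · intro hf n hn; rw [fourierBasis_repr]; exact hf n hn
    · intro hf n hn; rw [← fourierBasis_repr]; exact hf n hn
  rw [h]
  refine isClosed_iInter fun n => isClosed_iInter fun _ => ?_
  have h1 : Continuous fun x : lp (fun _ : ℤ => ℂ) 2 => (x : ℤ → ℂ) n :=
    (continuous_apply n).comp lp.uniformContinuous_coe.continuous
  exact isClosed_eq (h1.comp fourierBasis.repr.continuous) continuous_const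
/-- An inner function: a nonconstant bounded function in `H²` which is unimodular a.e. -/
structure IsInner (u : T2π → ℂ) : Prop where
  meas : AEStronglyMeasurable u μ
  unimodular : ∀ᵐ θ ∂μ, ‖u θ‖ = 1
  negCoeff : ∀ n : ℤ, n < 0 → fourierCoeff u n = 0
  nonconst : ¬ ∃ c : ℂ, u =ᵐ[μ] fun _ => c

lemma IsInner.memLinfty {u : T2π → ℂ} (hu : IsInner u) : MemLp u ⊤ μ :=
  memLp_top_of_bound hu.meas 1 (hu.unimodular.mono fun θ h => by
    rw [h])

/-- The holomorphic extension of a function on the circle to the open unit disk, via the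
power series whose coefficients are the Fourier coefficients of nonnegative index. -/
def extD (u : T2π → ℂ) (z : ℂ) : ℂ := ∑' n : ℕ, fourierCoeff u (n : ℤ) * z ^ n

/-- The spectrum `σ(u)` of an inner function `u`: the set of `λ` in the closed unit disk where
`liminf_{z → λ, z ∈ 𝔻} |u(z)| = 0`. -/
def specU (u : T2π → ℂ) : Set ℂ :=
  {l | l ∈ Metric.closedBall (0 : ℂ) 1 ∧
    Filter.liminf (fun z => ‖extD u z‖) (nhdsWithin l (Metric.ball (0 : ℂ) 1)) = 0}

/-- `σ(u) ∩ 𝕋`, viewed as a subset of the additive circle. -/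
def specT (u : T2π → ℂ) : Set T2π := {θ : T2π | zfun θ ∈ specU u}

/-- The model space `K_u = H² ⊖ uH²`. -/
def KuSub (u : T2π → ℂ) (hu : IsInner u) : Submodule ℂ Ltwo :=
  H2 ⊓ (Submodule.map (mulCLM u hu.memLinfty).toLinearMap H2)ᗮ

lemma isClosed_KuSub (u : T2π → ℂ) (hu : IsInner u) : IsClosed ((KuSub u hu : Set Ltwo)) := by
  have h : (KuSub u hu : Set Ltwo) = (H2 : Set Ltwo) ∩
      ((Submodule.map (mulCLM u hu.memLinfty).toLinearMap H2)ᗮ : Set Ltwo) := rfl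
  rw [h]
  exact isClosed_H2.inter (Submodule.isClosed_orthogonal _)

instance (u : T2π → ℂ) (hu : IsInner u) : CompleteSpace (KuSub u hu) :=
  (isClosed_KuSub u hu).completeSpace_coe

attribute [irreducible] H2 KuSub mulCLM

instance KuNormedAddCommGroup (u : T2π → ℂ) (hu : IsInner u) :
    NormedAddCommGroup (KuSub u hu) := Submodule.normedAddCommGroup _

instance KuInnerProductSpace (u : T2π → ℂ) (hu : IsInner u) :
    InnerProductSpace ℂ (KuSub u hu) := Submodule.innerProductSpace _

instance KuNormedSpace (u : T2π → ℂ) (hu : IsInner u) :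
    NormedSpace ℂ (KuSub u hu) := by infer_instance

instance KuContinuousStar (u : T2π → ℂ) (hu : IsInner u) :
    ContinuousStar (KuSub u hu →L[ℂ] KuSub u hu) :=
  ⟨(ContinuousLinearMap.adjoint (𝕜 := ℂ) (E := KuSub u hu) (F := KuSub u hu)).continuous⟩

/-- The truncated Toeplitz operator `A_φ^u = P_u M_φ |_{K_u}` on the model space `K_u`. -/
def TTOp (u : T2π → ℂ) (hu : IsInner u) (φ : T2π → ℂ) (hφ : MemLp φ ⊤ μ) :
    KuSub u hu →L[ℂ] KuSub u hu :=
  (Submodule.orthogonalProjectionOnto (KuSub u hu)) ∘L (mulCLM φ hφ) ∘L (KuSub u hu).subtypeL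

/-- The compressed shift `A_z^u`. -/
def Az (u : T2π → ℂ) (hu : IsInner u) : KuSub u hu →L[ℂ] KuSub u hu :=
  TTOp u hu zfun memLinfty_zfun

/-- The unital C*-algebra generated by the compressed shift. -/
def CstarAz (u : T2π → ℂ) (hu : IsInner u) :
    StarSubalgebra ℂ (KuSub u hu →L[ℂ] KuSub u hu) :=
  StarAlgebra.elemental ℂ (Az u hu)

/-- The commutator ideal of a C*-algebra of operators, i.e. the smallest closed two-sided
ideal containing all commutators: the closure of the two-sided ideal generated by the
commutators.  Realized here as a subset of the ambient algebra of bounded operators. -/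
def commutatorIdealSet {u : T2π → ℂ} {hu : IsInner u}
    (S : StarSubalgebra ℂ (KuSub u hu →L[ℂ] KuSub u hu)) :
    Set (KuSub u hu →L[ℂ] KuSub u hu) :=
  Subtype.val '' (closure
    ((TwoSidedIdeal.span {x : S | ∃ a b : S, x = a * b - b * a} : TwoSidedIdeal S) : Set S))

/-- The essential spectrum of an operator on `K_u`: the spectrum of its image in the Calkin
algebra, i.e. the set of `z` such that `z - T` is not invertible modulo the compacts. -/
def essSpectrum {u : T2π → ℂ} {hu : IsInner u} (T : KuSub u hu →L[ℂ] KuSub u hu) : Set ℂ :=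
  {z : ℂ | ¬ ∃ S : KuSub u hu →L[ℂ] KuSub u hu,
    IsCompactOperator (⇑(S * (z • (1 : KuSub u hu →L[ℂ] KuSub u hu) - T) - 1)) ∧
    IsCompactOperator (⇑((z • (1 : KuSub u hu →L[ℂ] KuSub u hu) - T) * S - 1))}

/-- The essential norm of an operator on `K_u`: the norm of its image in the Calkin algebra,
i.e. the distance to the ideal of compact operators. -/
def essNorm {u : T2π → ℂ} {hu : IsInner u} (T : KuSub u hu →L[ℂ] KuSub u hu) : ℝ :=
  sInf {c : ℝ | ∃ K : KuSub u hu →L[ℂ] KuSub u hu, IsCompactOperator (⇑K) ∧ c = ‖T - K‖}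


/-! ### Piecewise continuous symbols -/

/-- `φ` has one-sided limits `Lp` (from above) and `Lm` (from below) at the point `ζ` of the
circle, computed in terms of any lift of `ζ` to `ℝ`. -/
def HasOneSidedLimits (φ : T2π → ℂ) (ζ : T2π) (Lp Lm : ℂ) : Prop :=
  ∀ x : ℝ, (x : T2π) = ζ →
    Filter.Tendsto (fun t : ℝ => φ (t : T2π)) (nhdsWithin x (Set.Ioi x)) (nhds Lp) ∧
    Filter.Tendsto (fun t : ℝ => φ (t : T2π)) (nhdsWithin x (Set.Iio x)) (nhds Lm)

/-- A piecewise continuous function on the circle: continuous off a finite set, with one-sided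
limits at each of the exceptional points. -/
def PiecewiseContinuous (φ : T2π → ℂ) : Prop :=
  ∃ F : Finset T2π, ContinuousOn φ ((↑F : Set T2π)ᶜ) ∧
    ∀ ζ ∈ F, ∃ Lp Lm : ℂ, HasOneSidedLimits φ ζ Lp Lm

/-- The function `χ(e^{iθ}) = 1 - θ/(2π)`, `0 ≤ θ < 2π`. -/
def chiFun : T2π → ℂ :=
  fun ζ => 1 - ((((AddCircle.measurableEquivIco (T := 2 * Real.pi) 0 ζ : ℝ) / (2 * Real.pi)) : ℝ) : ℂ)

lemma memLinfty_chiFun : MemLp chiFun ⊤ μ := by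
  have hmeas : Measurable chiFun := by
    have h1 : Measurable fun ζ : T2π => (AddCircle.measurableEquivIco (T := 2 * Real.pi) 0 ζ : ℝ) :=
      measurable_subtype_coe.comp (AddCircle.measurableEquivIco (T := 2 * Real.pi) 0).measurable
    exact (Complex.measurable_ofReal.comp (h1.div_const _)).const_sub 1
  refine memLp_top_of_bound hmeas.aestronglyMeasurable 1 (Filter.Eventually.of_forall fun ζ => ?_)
  set r : ℝ := (AddCircle.measurableEquivIco (T := 2 * Real.pi) 0 ζ : ℝ) with hr
  have hmem : r ∈ Set.Ico (0 : ℝ) (0 + 2 * Real.pi) :=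
    (AddCircle.measurableEquivIco (T := 2 * Real.pi) 0 ζ).2
  have h2π : (0 : ℝ) < 2 * Real.pi := fact2pi.out
  have h0 : 0 ≤ r / (2 * Real.pi) := div_nonneg hmem.1 h2π.le
  have h1' : r / (2 * Real.pi) < 1 := by
    rw [div_lt_one h2π]
    simpa using hmem.2
  have : chiFun ζ = (((1 : ℝ) - r / (2 * Real.pi) : ℝ) : ℂ) := by
    simp [chiFun, hr]
  rw [this, Complex.norm_real, Real.norm_eq_abs, abs_le]
  constructor <;> nlinarith

/-! ### Ingredients for Clark's unitary perturbations -/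

/-- The value `u(0)` of the holomorphic extension of `u` at the origin. -/
def u0 (u : T2π → ℂ) : ℂ := extD u 0

/-- The reproducing kernel `k₀ = 1 - conj(u(0))·u` at the origin, as a function. -/
def k0fun (u : T2π → ℂ) : T2π → ℂ := fun θ => 1 - (starRingEnd ℂ) (u0 u) * u θ

lemma memLinfty_k0fun {u : T2π → ℂ} (hu : IsInner u) : MemLp (k0fun u) ⊤ μ := by
  have hmeas : AEStronglyMeasurable (k0fun u) μ :=
    aestronglyMeasurable_const.sub (hu.meas.const_mul _)
  refine memLp_top_of_bound hmeas (1 + ‖u0 u‖) ?_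
  filter_upwards [hu.unimodular] with θ hθ
  calc ‖1 - (starRingEnd ℂ) (u0 u) * u θ‖
      ≤ ‖(1 : ℂ)‖ + ‖(starRingEnd ℂ) (u0 u) * u θ‖ := norm_sub_le _ _
    _ ≤ 1 + ‖u0 u‖ := by
        rw [norm_mul]
        simp only [norm_one, map_mul]
        rw [Complex.norm_conj, hθ, mul_one]

/-- `Cf(ζ) = u(ζ) ζ̄ conj(f(ζ))`, applied to `k₀`, as a function. -/
def Ck0fun (u : T2π → ℂ) : T2π → ℂ :=
  fun θ => u θ * (starRingEnd ℂ) (zfun θ) * (starRingEnd ℂ) (k0fun u θ)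

lemma memLinfty_Ck0fun {u : T2π → ℂ} (hu : IsInner u) : MemLp (Ck0fun u) ⊤ μ :=
  memLinfty_mul (memLinfty_mul hu.memLinfty (memLinfty_conj memLinfty_zfun))
    (memLinfty_conj (memLinfty_k0fun hu))

/-- `k₀` as an element of the model space (it indeed lies in `K_u`, so that projecting the
corresponding `L²`-function onto `K_u` does not change it). -/
def k0 (u : T2π → ℂ) (hu : IsInner u) : KuSub u hu :=
  Submodule.orthogonalProjectionOnto (KuSub u hu)
    (MemLp.toLp (k0fun u) ((memLinfty_k0fun hu).mono_exponent le_top))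

/-- `Ck₀` as an element of the model space. -/
def Ck0 (u : T2π → ℂ) (hu : IsInner u) : KuSub u hu :=
  Submodule.orthogonalProjectionOnto (KuSub u hu)
    (MemLp.toLp (Ck0fun u) ((memLinfty_Ck0fun hu).mono_exponent le_top))

/-- The rank-one operator `k₀ ⊗ Ck₀ : f ↦ ⟨f, Ck₀⟩ k₀` (the inner product being that of `L²`,
conjugate-linear in `Ck₀`). -/
def rankOneClark (u : T2π → ℂ) (hu : IsInner u) : KuSub u hu →L[ℂ] KuSub u hu :=
  (innerSL ℂ (Ck0 u hu)).smulRight (k0 u hu)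

/-- The Clark perturbation `U_α = A_z^u + (α/(1 - conj(u(0))α)) k₀ ⊗ Ck₀`. -/
def clarkU (u : T2π → ℂ) (hu : IsInner u) (α : ℂ) : KuSub u hu →L[ℂ] KuSub u hu :=
  Az u hu + (α / (1 - (starRingEnd ℂ) (u0 u) * α)) • rankOneClark u hu

/-! ### Complex symmetric operators -/

/-- A conjugation: a conjugate-linear isometric involution. -/
structure IsConjugation {E : Type*} [NormedAddCommGroup E] [InnerProductSpace ℂ E]
    (J : E → E) : Prop where
  map_add : ∀ x y, J (x + y) = J x + J y
  map_smul : ∀ (c : ℂ) (x), J (c • x) = (starRingEnd ℂ) c • J x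
  involutive : ∀ x, J (J x) = x
  inner_map : ∀ x y, (inner ℂ (J x) (J y) : ℂ) = (inner ℂ y x : ℂ)

/-- The block operator matrix `[[0, A], [0, 0]]` on `H ⊕ H` (with the `ℓ²` direct sum norm). -/
def blockOp {H : Type*} [NormedAddCommGroup H] [InnerProductSpace ℂ H] (A : H →L[ℂ] H) :
    WithLp 2 (H × H) →L[ℂ] WithLp 2 (H × H) :=
  (((WithLp.prodContinuousLinearEquiv 2 ℂ H H).symm : (H × H) →L[ℂ] WithLp 2 (H × H)) ∘L
    ((A.comp (ContinuousLinearMap.snd ℂ H H)).prod 0)) ∘L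
    ((WithLp.prodContinuousLinearEquiv 2 ℂ H H) : WithLp 2 (H × H) →L[ℂ] (H × H))


/-! ### The unilateral shift and direct sums -/

/-- `ℓ²(ℕ)`. -/
abbrev ellTwo := lp (fun _ : ℕ => ℂ) 2

/-- The underlying function of the unilateral shift: `(x₀, x₁, …) ↦ (0, x₀, x₁, …)`. -/
def shiftFun (x : ℕ → ℂ) : ℕ → ℂ := fun n => if n = 0 then 0 else x (n - 1)

lemma memℓp_shiftFun (x : ellTwo) : Memℓp (shiftFun (⇑x)) 2 := by
  apply memℓp_gen
  have hs : Summable fun n : ℕ => ‖x n‖ ^ (2 : ℝ≥0∞).toReal :=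
    (lp.memℓp x).summable (by norm_num)
  refine (summable_nat_add_iff 1).mp ?_
  have h : (fun n : ℕ => ‖shiftFun (⇑x) (n + 1)‖ ^ (2 : ℝ≥0∞).toReal)
      = fun n : ℕ => ‖x n‖ ^ (2 : ℝ≥0∞).toReal := by
    funext n; simp [shiftFun]
  rw [h]; exact hs

lemma tsum_shiftFun (x : ellTwo) :
    ∑' n : ℕ, ‖(⟨shiftFun (⇑x), memℓp_shiftFun x⟩ : ellTwo) n‖ ^ (2 : ℝ≥0∞).toReal
      = ∑' n : ℕ, ‖x n‖ ^ (2 : ℝ≥0∞).toReal := by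
  show ∑' n : ℕ, ‖shiftFun (⇑x) n‖ ^ (2 : ℝ≥0∞).toReal = _
  rw [Summable.tsum_eq_zero_add ((memℓp_shiftFun x).summable (by norm_num))]
  have h0 : ‖shiftFun (⇑x) 0‖ ^ (2 : ℝ≥0∞).toReal = 0 := by
    simp [shiftFun, Real.zero_rpow (by norm_num : (2 : ℝ≥0∞).toReal ≠ 0)]
  have h : (fun n : ℕ => ‖shiftFun (⇑x) (n + 1)‖ ^ (2 : ℝ≥0∞).toReal)
      = fun n : ℕ => ‖x n‖ ^ (2 : ℝ≥0∞).toReal := by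
    funext n; simp [shiftFun]
  rw [h0, h, zero_add]

/-- The unilateral shift `S` on `ℓ²(ℕ)`. -/
def shiftS : ellTwo →L[ℂ] ellTwo :=
  LinearMap.mkContinuous
    { toFun := fun x => (⟨shiftFun (⇑x), memℓp_shiftFun x⟩ : ellTwo)
      map_add' := fun x y => by
        apply Subtype.ext
        funext n
        have h1 : (x + y : ellTwo) n = x n + y n := by rw [lp.coeFn_add]; rfl
        show shiftFun (⇑(x + y)) n = shiftFun (⇑x) n + shiftFun (⇑y) n
        by_cases h : n = 0 <;> simp [shiftFun, h, h1]
      map_smul' := fun c x => by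
        apply Subtype.ext
        funext n
        have h1 : (c • x : ellTwo) n = c • x n := by rw [lp.coeFn_smul]; rfl
        show shiftFun (⇑(c • x)) n = c • shiftFun (⇑x) n
        by_cases h : n = 0 <;> simp [shiftFun, h, h1] }
    1
    (fun x => by
      have h2 : (0 : ℝ) < (2 : ℝ≥0∞).toReal := by norm_num
      show ‖(⟨shiftFun (⇑x), memℓp_shiftFun x⟩ : ellTwo)‖ ≤ 1 * ‖x‖
      rw [one_mul, lp.norm_eq_tsum_rpow h2, lp.norm_eq_tsum_rpow h2, tsum_shiftFun x])

/-- The diagonal (componentwise) operator `⊕ᵢ Vᵢ` on an `ℓ²`-direct sum, given a uniform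
bound on the `Vᵢ`. -/
def lpDiag {E : ℕ → Type*} [∀ i, NormedAddCommGroup (E i)] [∀ i, NormedSpace ℂ (E i)]
    (V : ∀ i, E i →L[ℂ] E i) (C : ℝ) (hC : 0 ≤ C) (hV : ∀ i (y : E i), ‖V i y‖ ≤ C * ‖y‖) :
    lp E 2 →L[ℂ] lp E 2 :=
  have h2 : (0 : ℝ) < (2 : ℝ≥0∞).toReal := by norm_num
  have key : ∀ x : lp E 2, Summable fun i => ‖V i (x i)‖ ^ (2 : ℝ≥0∞).toReal := by
    intro x
    refine Summable.of_nonneg_of_le (fun i => Real.rpow_nonneg (norm_nonneg _) _)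
      (fun i => ?_) (((lp.memℓp x).summable h2).mul_left (C ^ (2 : ℝ≥0∞).toReal))
    calc ‖V i (x i)‖ ^ (2 : ℝ≥0∞).toReal
        ≤ (C * ‖x i‖) ^ (2 : ℝ≥0∞).toReal :=
          Real.rpow_le_rpow (norm_nonneg _) (hV i (x i)) h2.le
      _ = C ^ (2 : ℝ≥0∞).toReal * ‖x i‖ ^ (2 : ℝ≥0∞).toReal :=
          Real.mul_rpow hC (norm_nonneg _)
  LinearMap.mkContinuous
    { toFun := fun x => (⟨fun i => V i (x i), memℓp_gen (key x)⟩ : lp E 2)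
      map_add' := fun x y => by
        apply Subtype.ext
        funext i
        have h1 : (x + y : lp E 2) i = x i + y i := by rw [lp.coeFn_add]; rfl
        show V i ((x + y : lp E 2) i) = V i (x i) + V i (y i)
        rw [h1, map_add]
      map_smul' := fun c x => by
        apply Subtype.ext
        funext i
        have h1 : (c • x : lp E 2) i = c • x i := by rw [lp.coeFn_smul]; rfl
        show V i ((c • x : lp E 2) i) = c • V i (x i)
        rw [h1, _root_.map_smul] }
    C
    (fun x => by
      show ‖(⟨fun i => V i (x i), memℓp_gen (key x)⟩ : lp E 2)‖ ≤ C * ‖x‖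
      rw [lp.norm_eq_tsum_rpow h2, lp.norm_eq_tsum_rpow h2]
      have hsum := (lp.memℓp x).summable h2
      have hineq : ∑' i, ‖(⟨fun i => V i (x i), memℓp_gen (key x)⟩ : lp E 2) i‖
            ^ (2 : ℝ≥0∞).toReal
          ≤ C ^ (2 : ℝ≥0∞).toReal * ∑' i, ‖x i‖ ^ (2 : ℝ≥0∞).toReal := by
        rw [← tsum_mul_left]
        refine Summable.tsum_le_tsum (fun i => ?_) (key x) (hsum.mul_left _)
        calc ‖V i (x i)‖ ^ (2 : ℝ≥0∞).toReal
            ≤ (C * ‖x i‖) ^ (2 : ℝ≥0∞).toReal :=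
              Real.rpow_le_rpow (norm_nonneg _) (hV i (x i)) h2.le
          _ = C ^ (2 : ℝ≥0∞).toReal * ‖x i‖ ^ (2 : ℝ≥0∞).toReal :=
              Real.mul_rpow hC (norm_nonneg _)
      calc (∑' i, ‖(⟨fun i => V i (x i), memℓp_gen (key x)⟩ : lp E 2) i‖
            ^ (2 : ℝ≥0∞).toReal) ^ (1 / (2 : ℝ≥0∞).toReal)
          ≤ (C ^ (2 : ℝ≥0∞).toReal * ∑' i, ‖x i‖ ^ (2 : ℝ≥0∞).toReal)
              ^ (1 / (2 : ℝ≥0∞).toReal) := by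
            refine Real.rpow_le_rpow ?_ hineq (by positivity)
            exact tsum_nonneg fun i => Real.rpow_nonneg (norm_nonneg _) _
        _ = C * (∑' i, ‖x i‖ ^ (2 : ℝ≥0∞).toReal) ^ (1 / (2 : ℝ≥0∞).toReal) := by
            rw [Real.mul_rpow (Real.rpow_nonneg hC _)
              (tsum_nonneg fun i => Real.rpow_nonneg (norm_nonneg _) _)]
            rw [← Real.rpow_mul hC, mul_one_div_cancel (ne_of_gt h2), Real.rpow_one])


/-- The Hankel-type operator `H_f^u : K_u → L²`, `g ↦ (I - P_u)(f·g)`. -/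
def hankel (u : T2π → ℂ) (hu : IsInner u) (f : T2π → ℂ) (hf : MemLp f ⊤ μ) :
    KuSub u hu →L[ℂ] Ltwo :=
  ((ContinuousLinearMap.id ℂ Ltwo - (KuSub u hu).subtypeL ∘L Submodule.orthogonalProjectionOnto (KuSub u hu)) ∘L
    mulCLM f hf) ∘L (KuSub u hu).subtypeL

/-- `S ⊕ S*` on `ℓ² ⊕ ℓ²`. -/
def sOplusSstar : WithLp 2 (ellTwo × ellTwo) →L[ℂ] WithLp 2 (ellTwo × ellTwo) :=
  (((WithLp.prodContinuousLinearEquiv 2 ℂ ellTwo ellTwo).symm :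
      (ellTwo × ellTwo) →L[ℂ] WithLp 2 (ellTwo × ellTwo)) ∘L
    (shiftS.prodMap (ContinuousLinearMap.adjoint shiftS))) ∘L
    ((WithLp.prodContinuousLinearEquiv 2 ℂ ellTwo ellTwo) :
      WithLp 2 (ellTwo × ellTwo) →L[ℂ] (ellTwo × ellTwo))

/-- `⊕_{i=1}^∞ (S ⊕ S*)` on the `ℓ²`-direct sum of countably many copies of `ℓ² ⊕ ℓ²`. -/
def bigDirectSum :
    lp (fun _ : ℕ => WithLp 2 (ellTwo × ellTwo)) 2 →L[ℂ]
      lp (fun _ : ℕ => WithLp 2 (ellTwo × ellTwo)) 2 :=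
  lpDiag (fun _ => sOplusSstar) ‖sOplusSstar‖ (norm_nonneg _)
    (fun _ y => ContinuousLinearMap.le_opNorm _ y)


/-! The adjoint of `A = A_z^u` acts on `K_u` as the backward shift `f ↦ (f - f(0)) / z`, so the
defect `1 - A A*` is the rank-one operator `f ↦ ⟪k₀, f⟫ k₀`, with `k₀ = P_u 1` the reproducing
kernel at the origin. A closed subspace reducing `A` is invariant under this defect, hence it
either contains `k₀` or is orthogonal to it. Finally `⟪A^n k₀, f⟫ = f̂(n)` for `f ∈ K_u`, so `k₀`
is a cyclic vector for `A`, and the subspace is `K_u` or `{0}`. -/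

end TTOPaper

open Module.End ContinuousLinearMap InnerProductSpace
open scoped InnerProductSpace

section Irreducibility

variable {𝕜 E : Type*} [RCLike 𝕜] [NormedAddCommGroup E] [InnerProductSpace 𝕜 E]

theorem Submodule.mem_or_mem_orthogonal_of_inner_smul_mem (M : Submodule 𝕜 E)
    [M.HasOrthogonalProjection] {k : E} (hM : ∀ m ∈ M, ⟪k, m⟫_𝕜 • k ∈ M)
    (hM' : ∀ m ∈ Mᗮ, ⟪k, m⟫_𝕜 • k ∈ Mᗮ) : k ∈ M ∨ k ∈ Mᗮ := by
  obtain ⟨m, hm, m', hm', hk⟩ := M.exists_add_mem_mem_orthogonal k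
  by_cases ha : ⟪k, m⟫_𝕜 = 0
  · by_cases hb : ⟪k, m'⟫_𝕜 = 0
    · have : k = 0 := by
        rw [← inner_self_eq_zero (𝕜 := 𝕜), hk, inner_add_right, ← hk, ha, hb, add_zero]
      exact Or.inl (this ▸ M.zero_mem)
    · exact Or.inr ((Mᗮ.smul_mem_iff hb).mp (hM' m' hm'))
  · exact Or.inl ((M.smul_mem_iff ha).mp (hM m hm))

theorem Submodule.eq_top_of_cyclic_mem {T : E →L[𝕜] E} {k : E}
    (hk : ∀ x, (∀ n : ℕ, ⟪(T ^ n) k, x⟫_𝕜 = 0) → x = 0)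
    {M : Submodule 𝕜 E} [M.HasOrthogonalProjection] (hT : M ∈ invtSubmodule T.toLinearMap)
    (hkM : k ∈ M) : M = ⊤ := by
  have hpow : ∀ n : ℕ, (T ^ n) k ∈ M := by
    intro n
    induction n with
    | zero => exact hkM
    | succ n ih => rw [pow_succ']; exact hT ih
  rw [← Submodule.orthogonal_eq_bot_iff, Submodule.eq_bot_iff]
  exact fun x hx => hk x fun n => Submodule.inner_right_of_mem_orthogonal (hpow n) hx

variable [CompleteSpace E]

theorem ContinuousLinearMap.eq_bot_or_eq_top_of_one_sub_mul_adjoint_eq_rankOne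
    {T : E →L[𝕜] E} {k : E} (hdefect : 1 - T * adjoint T = rankOne 𝕜 k k)
    (hk : ∀ x, (∀ n : ℕ, ⟪(T ^ n) k, x⟫_𝕜 = 0) → x = 0)
    {M : Submodule 𝕜 E} [M.HasOrthogonalProjection] (hT : M ∈ invtSubmodule T.toLinearMap)
    (hT' : M ∈ invtSubmodule (adjoint T).toLinearMap) : M = ⊥ ∨ M = ⊤ := by
  have hTo : Mᗮ ∈ invtSubmodule T.toLinearMap := orthogonal_mem_invtSubmodule hT'
  have hTo' : Mᗮ ∈ invtSubmodule (adjoint T).toLinearMap :=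
    orthogonal_mem_invtSubmodule (T := adjoint T) (by rwa [adjoint_adjoint])
  have hdefect_mem {N : Submodule 𝕜 E} (hN : N ∈ invtSubmodule T.toLinearMap)
      (hN' : N ∈ invtSubmodule (adjoint T).toLinearMap) : ∀ m ∈ N, ⟪k, m⟫_𝕜 • k ∈ N := by
    intro m hm
    have h := congrArg (· m) hdefect
    simp only [sub_apply, one_apply_eq_self, mul_apply_eq_comp, rankOne_apply] at h
    exact h ▸ N.sub_mem hm (hN (hN' hm))
  rcases M.mem_or_mem_orthogonal_of_inner_smul_mem (hdefect_mem hT hT') (hdefect_mem hTo hTo')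
    with hkM | hkM
  · exact Or.inr (M.eq_top_of_cyclic_mem hk hT hkM)
  · exact Or.inl (M.orthogonal_eq_top_iff.mp (Mᗮ.eq_top_of_cyclic_mem hk hTo hkM))

end Irreducibility

namespace TTOPaper

local notation "M_z" => mulCLM zfun memLinfty_zfun
local notation "M_zbar" => mulCLM (fun θ => conj (zfun θ)) (memLinfty_conj memLinfty_zfun)

lemma inner_fourierLp (n : ℤ) (f : Ltwo) : ⟪fourierLp 2 n, f⟫_ℂ = fourierCoeff f n := by
  rw [← fourierBasis_repr, fourierBasis.repr_apply_apply, coe_fourierBasis]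

lemma eq_zero_of_forall_inner_fourierLp {f : Ltwo} (h : ∀ n : ℤ, ⟪fourierLp 2 n, f⟫_ℂ = 0) :
    f = 0 := by
  refine fourierBasis.repr.injective (Subtype.ext (funext fun n => ?_))
  rw [fourierBasis.repr_apply_apply, coe_fourierBasis, h n, map_zero]
  rfl

unseal H2 in
lemma mem_H2_iff {f : Ltwo} : f ∈ H2 ↔ ∀ n : ℤ, n < 0 → ⟪fourierLp 2 n, f⟫_ℂ = 0 := by
  simp only [inner_fourierLp]
  rfl

lemma fourierLp_mem_H2 {n : ℤ} (hn : 0 ≤ n) : fourierLp 2 n ∈ H2 :=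
  mem_H2_iff.mpr fun _ hm => orthonormal_fourier.inner_eq_zero (by omega)

lemma inner_eq_zero_of_mem_H2 {w f : Ltwo} (hw : ∀ n : ℤ, 0 ≤ n → ⟪w, fourierLp 2 n⟫_ℂ = 0)
    (hf : f ∈ H2) : ⟪w, f⟫_ℂ = 0 := by
  have hterm : (fun n : ℤ => ⟪w, fourierLp 2 n⟫_ℂ * ⟪fourierLp 2 n, f⟫_ℂ) = 0 := by
    funext n
    rcases lt_or_ge n 0 with hn | hn
    · rw [mem_H2_iff.mp hf n hn, mul_zero, Pi.zero_apply]
    · rw [hw n hn, zero_mul, Pi.zero_apply]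
  rw [← fourierBasis.tsum_inner_mul_inner w f, coe_fourierBasis, hterm, Pi.zero_def, tsum_zero]

unseal mulCLM in
lemma coeFn_mulCLM (φ : T2π → ℂ) (hφ : MemLp φ ⊤ μ) (f : Ltwo) :
    mulCLM φ hφ f =ᵐ[μ] fun θ => φ θ * f θ := by
  filter_upwards [MemLp.coeFn_toLp ((Lp.memLp f).smul (r := 2) hφ)] with θ h
  exact h

lemma mulCLM_comm {φ ψ : T2π → ℂ} (hφ : MemLp φ ⊤ μ) (hψ : MemLp ψ ⊤ μ) (f : Ltwo) :
    mulCLM φ hφ (mulCLM ψ hψ f) = mulCLM ψ hψ (mulCLM φ hφ f) := by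
  refine Lp.ext ?_
  filter_upwards [coeFn_mulCLM φ hφ (mulCLM ψ hψ f), coeFn_mulCLM ψ hψ f,
    coeFn_mulCLM ψ hψ (mulCLM φ hφ f), coeFn_mulCLM φ hφ f] with θ h₁ h₂ h₃ h₄
  rw [h₁, h₂, h₃, h₄, mul_left_comm]

lemma inner_mulCLM_left {φ : T2π → ℂ} (hφ : MemLp φ ⊤ μ) (f g : Ltwo) :
    ⟪mulCLM φ hφ f, g⟫_ℂ = ⟪f, mulCLM (fun θ => conj (φ θ)) (memLinfty_conj hφ) g⟫_ℂ := by
  rw [L2.inner_def, L2.inner_def]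
  refine integral_congr_ae ?_
  filter_upwards [coeFn_mulCLM φ hφ f, coeFn_mulCLM _ (memLinfty_conj hφ) g] with θ h₁ h₂
  simp only [h₁, h₂, RCLike.inner_apply, map_mul]
  ring

lemma inner_mulCLM_right {φ : T2π → ℂ} (hφ : MemLp φ ⊤ μ) (f g : Ltwo) :
    ⟪f, mulCLM φ hφ g⟫_ℂ = ⟪mulCLM (fun θ => conj (φ θ)) (memLinfty_conj hφ) f, g⟫_ℂ := by
  rw [← inner_conj_symm, inner_mulCLM_left, inner_conj_symm]

lemma inner_fourierLp_mulCLM_fourierLp {φ : T2π → ℂ} (hφ : MemLp φ ⊤ μ) (n m : ℤ) :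
    ⟪fourierLp 2 n, mulCLM φ hφ (fourierLp 2 m)⟫_ℂ = fourierCoeff φ (n - m) := by
  rw [L2.inner_def, fourierCoeff]
  refine integral_congr_ae ?_
  filter_upwards [coeFn_fourierLp 2 n, coeFn_mulCLM φ hφ (fourierLp 2 m), coeFn_fourierLp 2 m]
    with θ h₁ h₂ h₃
  rw [RCLike.inner_apply, h₁, h₂, h₃, ← fourier_neg, smul_eq_mul,
    show -(n - m) = -n + m by ring, fourier_add]
  ring

lemma mulCLM_mem_H2 {φ : T2π → ℂ} (hφ : MemLp φ ⊤ μ)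
    (hφneg : ∀ n : ℤ, n < 0 → fourierCoeff φ n = 0) {f : Ltwo} (hf : f ∈ H2) :
    mulCLM φ hφ f ∈ H2 := by
  refine mem_H2_iff.mpr fun n hn => ?_
  rw [inner_mulCLM_right]
  refine inner_eq_zero_of_mem_H2 (fun m hm => ?_) hf
  rw [← inner_mulCLM_right hφ, inner_fourierLp_mulCLM_fourierLp]
  exact hφneg _ (by omega)

lemma zfun_eq_fourier_one (θ : T2π) : zfun θ = fourier 1 θ := by
  rw [fourier_one]
  rfl

lemma mulCLM_zfun_fourierLp (n : ℤ) : M_z (fourierLp 2 n) = fourierLp 2 (n + 1) := by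
  refine Lp.ext ?_
  filter_upwards [coeFn_mulCLM zfun memLinfty_zfun (fourierLp 2 n), coeFn_fourierLp 2 n,
    coeFn_fourierLp 2 (n + 1)] with θ h₁ h₂ h₃
  rw [h₁, h₂, h₃, zfun_eq_fourier_one, ← fourier_add, add_comm]

lemma mulCLM_zfun_mulCLM_conj_zfun (f : Ltwo) : M_z (M_zbar f) = f := by
  refine Lp.ext ?_
  filter_upwards [coeFn_mulCLM zfun memLinfty_zfun (M_zbar f),
    coeFn_mulCLM _ (memLinfty_conj memLinfty_zfun) f] with θ h₁ h₂
  rw [h₁, h₂, ← mul_assoc, Complex.mul_conj]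
  simp [zfun]

lemma mulCLM_zfun_mem_H2 {f : Ltwo} (hf : f ∈ H2) : M_z f ∈ H2 := by
  refine mulCLM_mem_H2 memLinfty_zfun (fun n hn => ?_) hf
  rw [← sub_zero n, ← inner_fourierLp_mulCLM_fourierLp memLinfty_zfun, mulCLM_zfun_fourierLp]
  exact orthonormal_fourier.inner_eq_zero (by omega)

def backwardShift (F : Ltwo) : Ltwo := M_zbar F - ⟪fourierLp 2 0, F⟫_ℂ • fourierLp 2 (-1)

lemma inner_fourierLp_backwardShift {n : ℤ} (hn : n ≠ -1) (F : Ltwo) :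
    ⟪fourierLp 2 n, backwardShift F⟫_ℂ = ⟪fourierLp 2 (n + 1), F⟫_ℂ := by
  rw [backwardShift, inner_sub_right, inner_smul_right, ← inner_mulCLM_left memLinfty_zfun,
    mulCLM_zfun_fourierLp, orthonormal_fourier.inner_eq_zero hn, mul_zero, sub_zero]

lemma mulCLM_zfun_backwardShift (F : Ltwo) :
    M_z (backwardShift F) = F - ⟪fourierLp 2 0, F⟫_ℂ • fourierLp 2 0 := by
  rw [backwardShift, map_sub, map_smul, mulCLM_zfun_mulCLM_conj_zfun, mulCLM_zfun_fourierLp,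
    neg_add_cancel]

section ModelSpace

variable {u : T2π → ℂ} {hu : IsInner u}

unseal KuSub in
lemma mem_KuSub_iff {x : Ltwo} :
    x ∈ KuSub u hu ↔ x ∈ H2 ∧ ∀ h ∈ H2, ⟪mulCLM u hu.memLinfty h, x⟫_ℂ = 0 := by
  rw [KuSub, Submodule.mem_inf, Submodule.mem_orthogonal]
  refine and_congr_right fun _ => ⟨fun H h hh => H _ ⟨h, hh, rfl⟩, ?_⟩
  rintro H _ ⟨h, hh, rfl⟩
  exact H h hh

lemma mem_H2_of_mem_KuSub {x : Ltwo} (hx : x ∈ KuSub u hu) : x ∈ H2 :=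
  (mem_KuSub_iff.mp hx).1

lemma mulCLM_mem_orthogonal_KuSub {h : Ltwo} (hh : h ∈ H2) :
    mulCLM u hu.memLinfty h ∈ (KuSub u hu)ᗮ :=
  (Submodule.mem_orthogonal _ _).mpr fun _ hy => by
    rw [← inner_conj_symm, (mem_KuSub_iff.mp hy).2 h hh, map_zero]

lemma backwardShift_mem_KuSub {F : Ltwo} (hF : F ∈ KuSub u hu) :
    backwardShift F ∈ KuSub u hu := by
  obtain ⟨hF₂, hFu⟩ := mem_KuSub_iff.mp hF
  refine mem_KuSub_iff.mpr ⟨mem_H2_iff.mpr fun n hn => ?_, fun h hh => ?_⟩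
  · rcases eq_or_ne n (-1) with rfl | hn'
    · rw [backwardShift, inner_sub_right, inner_smul_right, ← inner_mulCLM_left memLinfty_zfun,
        mulCLM_zfun_fourierLp, neg_add_cancel,
        inner_self_eq_one_of_norm_eq_one (orthonormal_fourier.1 _), mul_one, sub_self]
    · rw [inner_fourierLp_backwardShift hn']
      exact mem_H2_iff.mp hF₂ _ (by omega)
  · have huh : ⟪mulCLM u hu.memLinfty h, fourierLp 2 (-1)⟫_ℂ = 0 := by
      rw [← inner_conj_symm, mem_H2_iff.mp (mulCLM_mem_H2 hu.memLinfty hu.negCoeff hh) _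
        (by norm_num), map_zero]
    rw [backwardShift, inner_sub_right, inner_smul_right, huh, mul_zero, sub_zero,
      ← inner_mulCLM_left memLinfty_zfun, mulCLM_comm, hFu _ (mulCLM_zfun_mem_H2 hh)]

lemma Az_apply (f : KuSub u hu) :
    Az u hu f = Submodule.orthogonalProjectionOnto (KuSub u hu) (M_z f) := rfl

lemma coe_adjoint_Az_apply (f : KuSub u hu) :
    (adjoint (Az u hu) f : Ltwo) = backwardShift f := by
  suffices adjoint (Az u hu) f = ⟨backwardShift f, backwardShift_mem_KuSub f.2⟩ from
    congrArg Subtype.val this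
  refine ext_inner_left ℂ fun g => ?_
  have hg : ⟪(g : Ltwo), fourierLp 2 (-1)⟫_ℂ = 0 := by
    rw [← inner_conj_symm, mem_H2_iff.mp (mem_H2_of_mem_KuSub g.2) _ (by norm_num), map_zero]
  rw [adjoint_inner_right, Az_apply, Submodule.inner_orthogonalProjectionOnto_eq_of_mem_right,
    inner_mulCLM_left memLinfty_zfun]
  change _ = ⟪(g : Ltwo), backwardShift f⟫_ℂ
  rw [backwardShift, inner_sub_right, inner_smul_right, hg, mul_zero, sub_zero]

lemma k0_eq_orthogonalProjectionOnto :
    k0 u hu = Submodule.orthogonalProjectionOnto (KuSub u hu) (fourierLp 2 0) := by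
  have hk0 : MemLp.toLp (k0fun u) ((memLinfty_k0fun hu).mono_exponent le_top)
      = fourierLp 2 0 - conj (u0 u) • mulCLM u hu.memLinfty (fourierLp 2 0) := by
    refine Lp.ext ?_
    filter_upwards [MemLp.coeFn_toLp ((memLinfty_k0fun hu).mono_exponent le_top),
      Lp.coeFn_sub (fourierLp 2 0) (conj (u0 u) • mulCLM u hu.memLinfty (fourierLp 2 0)),
      Lp.coeFn_smul (conj (u0 u)) (mulCLM u hu.memLinfty (fourierLp 2 0)),
      coeFn_mulCLM u hu.memLinfty (fourierLp 2 0), coeFn_fourierLp 2 0] with θ h₁ h₂ h₃ h₄ h₅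
    rw [h₁, h₂, Pi.sub_apply, h₃, Pi.smul_apply, h₄, h₅, fourier_zero]
    simp [k0fun]
  rw [k0, hk0, map_sub, map_smul, Submodule.orthogonalProjectionOnto_apply_of_mem_orthogonal
    (mulCLM_mem_orthogonal_KuSub (fourierLp_mem_H2 le_rfl)), smul_zero, sub_zero]

lemma inner_k0 (f : KuSub u hu) : ⟪k0 u hu, f⟫_ℂ = ⟪fourierLp 2 0, (f : Ltwo)⟫_ℂ := by
  rw [k0_eq_orthogonalProjectionOnto, Submodule.inner_orthogonalProjectionOnto_eq_of_mem_right]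

lemma one_sub_Az_mul_adjoint :
    1 - Az u hu * adjoint (Az u hu) = rankOne ℂ (k0 u hu) (k0 u hu) := by
  ext1 f
  rw [sub_apply, one_apply_eq_self, mul_apply_eq_comp, rankOne_apply, Az_apply,
    coe_adjoint_Az_apply, mulCLM_zfun_backwardShift, map_sub, map_smul,
    Submodule.orthogonalProjectionOnto_mem_subspace_eq_self, ← k0_eq_orthogonalProjectionOnto,
    inner_k0, sub_sub_cancel]

lemma inner_Az_pow_k0 (n : ℕ) (f : KuSub u hu) :
    ⟪(Az u hu ^ n) (k0 u hu), f⟫_ℂ = ⟪fourierLp 2 n, (f : Ltwo)⟫_ℂ := by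
  induction n generalizing f with
  | zero => exact inner_k0 f
  | succ n ih =>
    rw [pow_succ', mul_apply_eq_comp, ← adjoint_inner_right, ih, coe_adjoint_Az_apply,
      inner_fourierLp_backwardShift (by omega), Nat.cast_succ]

lemma eq_zero_of_forall_inner_Az_pow_k0 {f : KuSub u hu}
    (hf : ∀ n : ℕ, ⟪(Az u hu ^ n) (k0 u hu), f⟫_ℂ = 0) : f = 0 := by
  refine Subtype.ext (eq_zero_of_forall_inner_fourierLp fun n => ?_)
  rcases lt_or_ge n 0 with hn | hn
  · exact mem_H2_iff.mp (mem_H2_of_mem_KuSub f.2) n hn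
  · lift n to ℕ using hn
    rw [← inner_Az_pow_k0]
    exact hf n

end ModelSpace

/-- The compressed shift `A_z^u` is irreducible: the only closed subspaces of
`K_u` invariant under both `A_z^u` and its adjoint are `{0}` and `K_u`. -/
theorem Az_irreducible (u : T2π → ℂ) (hu : IsInner u) :
    ∀ M : Submodule ℂ (KuSub u hu), IsClosed (M : Set (KuSub u hu)) →
      (∀ f ∈ M, Az u hu f ∈ M) →
      (∀ f ∈ M, ContinuousLinearMap.adjoint (Az u hu) f ∈ M) →
      M = ⊥ ∨ M = ⊤ := by
  intro M hM hAz hAz'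
  have : CompleteSpace M := hM.completeSpace_coe
  exact eq_bot_or_eq_top_of_one_sub_mul_adjoint_eq_rankOne one_sub_Az_mul_adjoint
    (fun _ => eq_zero_of_forall_inner_Az_pow_k0) hAz hAz'

end TTOPaper
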